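/- arXiv:2108.09303 — 4 statements merged into one kernel-verified Lean document; each statement's English description precedes it below -/
import Mathlib

section
/- Let J be a finite set with an involution γ: J → J, partitioned as J = J_f ⊔ J_1 ⊔ J_2 where γ fixes J_f pointwise and γ(J_1) = J_2. Define γ̃ on the matrix algebra M_J(ℂ) by γ̃(e_{μ,ν}) = e_{γ(ν),γ(μ)} on matrix units, extended ℂ-linearly. Then the real algebra M_J(ℂ)_ℝ = { a ∈ M_J(ℂ) : γ̃(a) = a* } is isomorphic, as a real algebra, to M_J(ℝ). -/
/-!
Write `ā` for the entrywise conjugate of `a` and `P` for the permutation matrix of `γ`, so that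
`γ̃(a) = a*` says `P ā P = a`. The matrix `s = (1 + i) + (1 - i) P` satisfies `s̄ = P s`, and
`s s̄ = 4` because `P² = 1`. Hence `X ↦ s X s⁻¹` sends real matrices to fixed points of
`a ↦ P ā P`, and conversely `s⁻¹ a s` is real whenever `a` is such a fixed point.
-/

open Complex

namespace Matrix

variable {n : Type*}

theorem map_ofReal_map_re_eq_self {B : Matrix n n ℂ} (hB : B.map star = B) :
    (B.map re).map ((↑) : ℝ → ℂ) = B := by
  ext i j
  exact conj_eq_iff_re.mp (congr_fun₂ hB i j)

variable [Fintype n]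

theorem map_star_mul (M N : Matrix n n ℂ) : (M * N).map star = M.map star * N.map star :=
  Matrix.map_mul (f := starRingEnd ℂ)

theorem submatrix_mul_mul_submatrix (e : n → n) (M N K : Matrix n n ℂ) :
    (M * N * K).submatrix e e = M.submatrix e id * N * K.submatrix id e := by
  rw [submatrix_mul _ _ e id e Function.bijective_id,
    submatrix_mul _ _ e id id Function.bijective_id, submatrix_id_id]

variable [DecidableEq n]

noncomputable def complexifyConj (s : (Matrix n n ℂ)ˣ) :
    Matrix n n ℝ →ₐ[ℝ] Matrix n n ℂ :=
  (MulSemiringAction.toAlgEquiv ℝ (Matrix n n ℂ) (ConjAct.toConjAct s)).toAlgHom.comp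
    (Algebra.ofId ℝ ℂ).mapMatrix

theorem complexifyConj_apply (s : (Matrix n n ℂ)ˣ) (X : Matrix n n ℝ) :
    complexifyConj s X =
      (s : Matrix n n ℂ) * X.map ((↑) : ℝ → ℂ) * (↑s⁻¹ : Matrix n n ℂ) :=
  rfl

theorem complexifyConj_injective (s : (Matrix n n ℂ)ˣ) : Function.Injective (complexifyConj s) :=
  fun _ _ h => map_injective ofReal_injective
    ((MulSemiringAction.toAlgEquiv ℝ (Matrix n n ℂ) (ConjAct.toConjAct s)).injective h)

theorem range_complexifyConj {e : n → n} (he : Function.Bijective e) (s : (Matrix n n ℂ)ˣ)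
    (hs : (s : Matrix n n ℂ).map star = (s : Matrix n n ℂ).submatrix e id) :
    Set.range (complexifyConj s) = {a | a.submatrix e e = a.map star} := by
  have hs_inv :
      (↑s⁻¹ : Matrix n n ℂ).map star = (↑s⁻¹ : Matrix n n ℂ).submatrix id e := by
    refine left_inv_eq_right_inv (a := (s : Matrix n n ℂ).map star) ?_ ?_
    · rw [← map_star_mul, Units.inv_mul, Matrix.map_one _ (star_zero _) (star_one _)]
    · rw [hs, ← submatrix_mul _ _ e id e Function.bijective_id, Units.mul_inv,
        submatrix_one _ he.injective]
  ext a
  constructor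
  · rintro ⟨X, rfl⟩
    have hX : (X.map ((↑) : ℝ → ℂ)).map star = X.map ((↑) : ℝ → ℂ) := by
      ext i j; exact conj_ofReal _
    rw [Set.mem_ofPred_eq, complexifyConj_apply, map_star_mul, map_star_mul, hs, hs_inv, hX,
      submatrix_mul_mul_submatrix]
  · intro ha
    set B := (↑s⁻¹ : Matrix n n ℂ) * a * s
    have hB : B.map star = B := by
      rw [map_star_mul, map_star_mul, hs, hs_inv, ← ha, ← submatrix_mul _ _ id e e he,
        ← submatrix_mul _ _ id e id he, submatrix_id_id]
    refine ⟨B.map re, ?_⟩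
    rw [complexifyConj_apply, map_ofReal_map_re_eq_self hB]
    simp [B, mul_assoc]

theorem exists_unit_map_star_eq_submatrix {γ : n → n} (hγ : Function.Involutive γ) :
    ∃ s : (Matrix n n ℂ)ˣ,
      (s : Matrix n n ℂ).map star = (s : Matrix n n ℂ).submatrix γ id := by
  set P : Matrix n n ℂ := (1 : Matrix n n ℂ).submatrix γ id
  have hPγ : P.submatrix γ id = 1 := by
    simp [P, submatrix_submatrix, hγ.comp_self]
  have hPP : P * P = 1 := by
    rw [← hPγ]; exact one_submatrix_mul γ (Equiv.refl n) P
  have hPstar : P.map star = P := by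
    rw [← submatrix_map, Matrix.map_one _ (star_zero _) (star_one _)]
  set s : Matrix n n ℂ := (1 + I) • 1 + (1 - I) • P
  have hs : s.map star = (1 - I) • 1 + (1 + I) • P := by
    rw [Matrix.map_add _ star_add, Matrix.map_smul' _ _ _ star_mul',
      Matrix.map_smul' _ _ _ star_mul', Matrix.map_one _ (star_zero _) (star_one _), hPstar]
    simp [sub_eq_add_neg]
  have hsγ : s.submatrix γ id = s.map star := by
    simp only [hs, s, submatrix_add, submatrix_smul, Pi.add_apply, Pi.smul_apply, hPγ]
    rw [add_comm]
  have hss : s * s.map star = (4 : ℂ) • 1 := by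
    rw [hs]
    simp only [s, add_mul, mul_add, smul_mul_smul, one_mul, mul_one, hPP]
    linear_combination (norm := module)
      I_sq • ((-2 : ℂ) • (1 : Matrix n n ℂ) + (2 : ℂ) • P)
  have hinv : s * ((4 : ℂ)⁻¹ • s.map star) = 1 := by
    rw [mul_smul_comm, hss, smul_smul]; norm_num
  exact ⟨⟨s, _, hinv, mul_eq_one_comm.mp hinv⟩, hsγ.symm⟩

end Matrix

theorem stmt_2_general (J : Type*) [Fintype J] [DecidableEq J]
    (γ : J → J) (hγ : γ ∘ γ = id) :
    ∃ φ : Matrix J J ℝ →ₐ[ℝ] Matrix J J ℂ,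
      Function.Injective φ ∧
      Set.range φ = {a : Matrix J J ℂ | ∀ i j, a (γ j) (γ i) = star (a j i)} := by
  have hγ_inv : Function.Involutive γ := congrFun hγ
  obtain ⟨s, hs⟩ := Matrix.exists_unit_map_star_eq_submatrix hγ_inv
  refine ⟨Matrix.complexifyConj s, Matrix.complexifyConj_injective s, ?_⟩
  rw [Matrix.range_complexifyConj hγ_inv.bijective s hs]
  exact Set.ext fun a => (Matrix.ext_iff.symm.trans forall_comm)

/-- Let `J` be finite with involution `γ`, partitioned `J = J_f ⊔ J₁ ⊔ J₂`
where `γ` fixes `J_f` and `γ(J₁) = J₂`. With `γ̃` on `M_J(ℂ)` given by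
`γ̃(e_{μ,ν}) = e_{γν,γμ}`, the real algebra `M_J(ℂ)_ℝ = {a : γ̃(a) = a*}` is isomorphic,
as a real algebra, to `M_J(ℝ)`: there is an injective ℝ-algebra homomorphism
`M_J(ℝ) → M_J(ℂ)` with range exactly `{a : γ̃(a) = a*}`. -/
theorem stmt_2 (J : Type*) [Fintype J] [DecidableEq J]
    (γ : J → J) (hγ : γ ∘ γ = id)
    (Jf J1 J2 : Finset J)
    (hpart : ∀ x : J,
      (x ∈ Jf ∧ x ∉ J1 ∧ x ∉ J2) ∨ (x ∈ J1 ∧ x ∉ Jf ∧ x ∉ J2) ∨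
        (x ∈ J2 ∧ x ∉ Jf ∧ x ∉ J1))
    (hf : ∀ x ∈ Jf, γ x = x) (h12 : Finset.image γ J1 = J2) :
    ∃ φ : Matrix J J ℝ →ₐ[ℝ] Matrix J J ℂ,
      Function.Injective φ ∧
      Set.range φ = {a : Matrix J J ℂ | ∀ i j, a (γ j) (γ i) = star (a j i)} :=
  stmt_2_general J γ hγ
end

section
/- Let B = [[0,-1,-1],[-1,1,1-n],[-1,1-n,1]] ∈ M₃(ℤ) for an integer n ≥ 2. Then the cokernel of the map ℤ⁶ → ℤ³ given by the 3×6 block matrix (B B) is isomorphic to ℤ/(2n). -/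
/-- For `B = [[0,-1,-1],[-1,1,1-n],[-1,1-n,1]]` with `n ≥ 2`, the cokernel of
the map `ℤ⁶ → ℤ³` given by the 3×6 block matrix `(B B)` is isomorphic to `ℤ/(2n)`. -/
theorem stmt_7 (n : ℕ) (hn : 2 ≤ n)
    (B : Matrix (Fin 3) (Fin 3) ℤ)
    (hB : B = !![0, -1, -1; -1, 1, 1 - (n : ℤ); -1, 1 - (n : ℤ), 1]) :
    Nonempty
      (((Fin 3 → ℤ) ⧸ LinearMap.range
          ((Matrix.toLin' B).coprod (Matrix.toLin' B))) ≃+ ZMod (2 * n)) := by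
  haveI : NeZero (2 * n) := ⟨by omega⟩
  have hrange : LinearMap.range ((Matrix.toLin' B).coprod (Matrix.toLin' B))
      = LinearMap.range (Matrix.toLin' B) := by
    rw [LinearMap.range_coprod, sup_idem]
  rw [hrange]
  subst hB
  set B : Matrix (Fin 3) (Fin 3) ℤ := !![0, -1, -1; -1, 1, 1 - (n : ℤ); -1, 1 - (n : ℤ), 1]
    with hBdef
  -- the linear functional
  let φ : (Fin 3 → ℤ) →ₗ[ℤ] ZMod (2 * n) :=
  { toFun := fun x => ((n * x 0 + x 1 - x 2 : ℤ) : ZMod (2 * n))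
    map_add' := by
      intro x y; simp only [Pi.add_apply]; push_cast; ring
    map_smul' := by
      intro c x; simp only [Pi.smul_apply, smul_eq_mul, RingHom.id_apply]; push_cast [zsmul_eq_mul]; ring }
  have hmv : ∀ v : Fin 3 → ℤ, Matrix.toLin' B v =
      ![-(v 1) - v 2, -(v 0) + v 1 + (1 - (n:ℤ)) * v 2, -(v 0) + (1 - (n:ℤ)) * v 1 + v 2] := by
    intro v
    funext i
    fin_cases i <;>
      simp [hBdef, Matrix.toLin'_apply, Matrix.mulVec, dotProduct,
        Fin.sum_univ_three] <;> ring
  have hle : LinearMap.range (Matrix.toLin' B) ≤ LinearMap.ker φ := by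
    rintro x ⟨v, rfl⟩
    rw [hmv v]
    show ((n * (-(v 1) - v 2) + (-(v 0) + v 1 + (1 - (n:ℤ)) * v 2)
        - (-(v 0) + (1 - (n:ℤ)) * v 1 + v 2) : ℤ) : ZMod (2 * n)) = 0
    rw [ZMod.intCast_zmod_eq_zero_iff_dvd]
    exact ⟨-(v 2), by push_cast; ring⟩
  have hker : LinearMap.ker φ ≤ LinearMap.range (Matrix.toLin' B) := by
    intro x hx
    have hx' : ((n * x 0 + x 1 - x 2 : ℤ) : ZMod (2 * n)) = 0 := hx
    rw [ZMod.intCast_zmod_eq_zero_iff_dvd] at hx'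
    obtain ⟨k, hk⟩ := hx'
    refine ⟨![(n:ℤ) * k - x 0 - x 1, k - x 0, -k], ?_⟩
    rw [hmv]
    funext i
    fin_cases i <;> simp <;> push_cast at hk ⊢ <;> linarith
  let ψ := Submodule.liftQ _ φ hle
  have hinj : Function.Injective ψ := by
    rw [← LinearMap.ker_eq_bot]
    exact Submodule.ker_liftQ_eq_bot _ _ _ hker
  have hsurj : Function.Surjective ψ := by
    intro c
    obtain ⟨a, ha⟩ := ZMod.intCast_surjective (n := 2 * n) c
    refine ⟨Submodule.Quotient.mk ![0, a, 0], ?_⟩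
    simpa [ψ, φ] using ha
  exact ⟨(LinearEquiv.ofBijective ψ ⟨hinj, hsurj⟩).toAddEquiv⟩
end

section
/- Let B = [[0,-1,-1],[-1,1,1-n],[-1,1-n,1]] ∈ M₃(ℤ) for n ≥ 2. Then ker(B B : ℤ⁶ → ℤ³) / image((-B; B) : ℤ³ → ℤ⁶) is isomorphic to ℤ/(2n), where (-B; B) is the 6×3 matrix with upper block -B and lower block B. -/
/-!
Since `det B = -2n ≠ 0`, `B` is injective, so the kernel of `(B B)` is the antidiagonal
`{(-y, y)}` and the quotient is the cokernel `ℤ³ / B ℤ³`. The functional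
`x ↦ n x₀ - x₁ + x₂ mod 2n` kills `B ℤ³` (it sends `B z` to `-2n z₁`), is onto, and every
vector in its kernel is hit by `B` through an explicit preimage, so the cokernel is `ℤ/(2n)`.
-/

open LinearMap Matrix

section AntidiagonalQuotient

variable {R M : Type*} [Ring R] [AddCommGroup M] [Module R M] {g : M →ₗ[R] M}

theorem mem_ker_coprod_self_iff (hg : Function.Injective g) {p : M × M} :
    p ∈ ker (g.coprod g) ↔ p.1 = -p.2 := by
  rw [mem_ker, coprod_apply, ← map_add, map_eq_zero_iff g hg, add_eq_zero_iff_eq_neg]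

def kerCoprodSelfToCokernel (g : M →ₗ[R] M) : ker (g.coprod g) →ₗ[R] M ⧸ range g :=
  (range g).mkQ ∘ₗ snd R M M ∘ₗ (ker (g.coprod g)).subtype

theorem kerCoprodSelfToCokernel_surjective (hg : Function.Injective g) :
    Function.Surjective (kerCoprodSelfToCokernel g) := by
  rintro ⟨m⟩
  exact ⟨⟨(-m, m), (mem_ker_coprod_self_iff hg).2 rfl⟩, rfl⟩

theorem ker_kerCoprodSelfToCokernel (hg : Function.Injective g) :
    ker (kerCoprodSelfToCokernel g) =
      (range ((-g).prod g)).comap (ker (g.coprod g)).subtype := by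
  ext ⟨p, hp⟩
  rw [mem_ker_coprod_self_iff hg] at hp
  simp only [kerCoprodSelfToCokernel, mem_ker, coe_comp, Function.comp_apply,
    Submodule.coe_subtype, snd_apply, Submodule.mkQ_apply, Submodule.Quotient.mk_eq_zero,
    Submodule.mem_comap, mem_range, prod_apply, Function.prod, LinearMap.neg_apply]
  constructor
  · rintro ⟨z, hz⟩
    exact ⟨z, Prod.ext (by rw [hp, hz]) hz⟩
  · rintro ⟨z, hz⟩
    exact ⟨z, congrArg Prod.snd hz⟩

noncomputable def kerCoprodSelfQuotEquivCokernel (hg : Function.Injective g) :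
    (ker (g.coprod g) ⧸ (range ((-g).prod g)).comap (ker (g.coprod g)).subtype) ≃ₗ[R]
      M ⧸ range g :=
  (Submodule.quotEquivOfEq _ _ (ker_kerCoprodSelfToCokernel hg).symm).trans
    ((kerCoprodSelfToCokernel g).quotKerEquivOfSurjective (kerCoprodSelfToCokernel_surjective hg))

end AntidiagonalQuotient

section CokernelB

def matB (n : ℕ) : Matrix (Fin 3) (Fin 3) ℤ :=
  !![0, -1, -1; -1, 1, 1 - (n : ℤ); -1, 1 - (n : ℤ), 1]

theorem det_matB (n : ℕ) : (matB n).det = -2 * n := by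
  rw [matB, det_fin_three]
  simp only [of_apply, cons_val', cons_val_zero, cons_val_one, cons_val_two, cons_val_fin_one,
    head_cons, head_fin_const, tail_cons]
  ring

theorem toLin'_matB_injective {n : ℕ} (hn : n ≠ 0) : Function.Injective (toLin' (matB n)) :=
  mulVec_injective_of_det_ne_zero (by rw [det_matB]; omega)

theorem matB_mulVec (n : ℕ) (z : Fin 3 → ℤ) :
    matB n *ᵥ z = ![-z 1 - z 2, -z 0 + z 1 + (1 - n) * z 2, -z 0 + (1 - n) * z 1 + z 2] := by
  ext i
  fin_cases i <;> simp [matB, mulVec, dotProduct, Fin.sum_univ_three, sub_eq_add_neg]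

def cokerFunctional (n : ℕ) : (Fin 3 → ℤ) →ₗ[ℤ] ZMod (2 * n) :=
  (Int.castAddHom (ZMod (2 * n))).toIntLinearMap ∘ₗ
    ((n : ℤ) • proj 0 - proj 1 + proj 2)

theorem cokerFunctional_apply (n : ℕ) (x : Fin 3 → ℤ) :
    cokerFunctional n x = ((n * x 0 - x 1 + x 2 : ℤ) : ZMod (2 * n)) := by
  simp [cokerFunctional]

theorem cokerFunctional_surjective (n : ℕ) : Function.Surjective (cokerFunctional n) := by
  intro c
  obtain ⟨m, rfl⟩ := ZMod.intCast_surjective c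
  exact ⟨![0, 0, m], by simp [cokerFunctional_apply]⟩

theorem ker_cokerFunctional (n : ℕ) : ker (cokerFunctional n) = range (toLin' (matB n)) := by
  ext x
  rw [mem_ker, cokerFunctional_apply, ZMod.intCast_zmod_eq_zero_iff_dvd, mem_range]
  push_cast
  constructor
  · rintro ⟨k, hk⟩
    refine ⟨![(n - 1) * x 0 - x 1 - n * k, -k, k - x 0], ?_⟩
    rw [toLin'_apply, matB_mulVec]
    ext i
    fin_cases i
    · show -(-k) - (k - x 0) = x 0
      ring
    · show -((n - 1) * x 0 - x 1 - n * k) + -k + (1 - n) * (k - x 0) = x 1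
      ring
    · show -((n - 1) * x 0 - x 1 - n * k) + (1 - n) * -k + (k - x 0) = x 2
      linear_combination -hk
  · rintro ⟨z, rfl⟩
    refine ⟨-z 1, ?_⟩
    rw [toLin'_apply, matB_mulVec]
    show n * (-z 1 - z 2) - (-z 0 + z 1 + (1 - n) * z 2) + (-z 0 + (1 - n) * z 1 + z 2) =
      2 * n * -z 1
    ring

noncomputable def cokernelMatBEquiv (n : ℕ) :
    ((Fin 3 → ℤ) ⧸ range (toLin' (matB n))) ≃ₗ[ℤ] ZMod (2 * n) :=
  (Submodule.quotEquivOfEq _ _ (ker_cokerFunctional n).symm).trans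
    ((cokerFunctional n).quotKerEquivOfSurjective (cokerFunctional_surjective n))

end CokernelB

/-- For `B = [[0,-1,-1],[-1,1,1-n],[-1,1-n,1]]` with `n ≥ 2`,
`ker(B B : ℤ⁶ → ℤ³) / image((-B; B) : ℤ³ → ℤ⁶)` is isomorphic to `ℤ/(2n)`. -/
theorem stmt_8 (n : ℕ) (hn : 2 ≤ n)
    (B : Matrix (Fin 3) (Fin 3) ℤ)
    (hB : B = !![0, -1, -1; -1, 1, 1 - (n : ℤ); -1, 1 - (n : ℤ), 1]) :
    Nonempty
      ((LinearMap.ker ((Matrix.toLin' B).coprod (Matrix.toLin' B)) ⧸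
          Submodule.comap (LinearMap.ker ((Matrix.toLin' B).coprod (Matrix.toLin' B))).subtype
            (LinearMap.range ((Matrix.toLin' (-B)).prod (Matrix.toLin' B)))) ≃+ ZMod (2 * n)) := by
  obtain rfl : B = matB n := hB
  rw [map_neg]
  exact ⟨((kerCoprodSelfQuotEquivCokernel (toLin'_matB_injective (by omega))).trans
    (cokernelMatBEquiv n)).toAddEquiv⟩
end

section
/- Let n ≥ 2 and consider the maps ∂₂: ℤ₂ ⊕ ℤ → (ℤ₂ ⊕ ℤ)² given by the matrix [[0,1],[0,-n],[0,-1],[0,n]], with the first and third coordinates landing in ℤ₂, and ∂₁: (ℤ₂ ⊕ ℤ)² → ℤ₂ ⊕ ℤ given by the matrix [[0,-1,0,-1],[0,n,0,n]]. Then coker ∂₁ ≅ ℤ/(2n), ker ∂₁ / im ∂₂ ≅ ℤ/2 ⊕ ℤ/(2n), and ker ∂₂ ≅ ℤ/2. -/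
def auxG (n : ℕ) : ℤ →+ ZMod (2*n) where
  toFun y := ((n * y : ℤ) : ZMod (2*n))
  map_zero' := by norm_num
  map_add' a b := by push_cast; ring

lemma auxG_two (n : ℕ) : auxG n 2 = 0 := by
  show ((n * 2 : ℤ) : ZMod (2*n)) = 0
  rw [ZMod.intCast_zmod_eq_zero_iff_dvd]
  exact ⟨1, by push_cast; ring⟩

def auxC (n : ℕ) : ZMod 2 →+ ZMod (2*n) := ZMod.lift 2 ⟨auxG n, auxG_two n⟩

lemma auxC_intCast (n : ℕ) (y : ℤ) : auxC n ((y : ℤ) : ZMod 2) = ((n*y : ℤ) : ZMod (2*n)) :=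
  ZMod.lift_coe 2 _ y

def phi1 (n : ℕ) : ZMod 2 × ℤ →+ ZMod (2*n) := (auxC n).coprod (Int.castAddHom _)

lemma phi1_apply (n : ℕ) (x : ZMod 2) (y : ℤ) :
    phi1 n (x, y) = auxC n x + ((y : ℤ) : ZMod (2*n)) := rfl

lemma phi1_surj (n : ℕ) : Function.Surjective (phi1 n) := by
  intro c
  obtain ⟨y, hy⟩ := ZMod.intCast_surjective (n := 2*n) c
  exact ⟨(0, y), by rw [phi1_apply, map_zero, zero_add, hy]⟩

def Psi (n : ℕ) : (ZMod 2 × ℤ) × (ZMod 2 × ℤ) →+ ZMod 2 × ZMod (2*n) :=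
  ((AddMonoidHom.fst (ZMod 2) ℤ).comp (AddMonoidHom.fst _ _) -
   (AddMonoidHom.fst (ZMod 2) ℤ).comp (AddMonoidHom.snd _ _)).prod
    ((phi1 n).comp (AddMonoidHom.fst _ _))

lemma Psi_apply (n : ℕ) (x z : ZMod 2) (y w : ℤ) :
    Psi n ((x, y), (z, w)) = (x - z, auxC n x + ((y : ℤ) : ZMod (2*n))) := rfl

lemma val_intCast2 (x : ZMod 2) : ((x.val : ℤ) : ZMod 2) = x := by
  rw [Int.cast_natCast]; exact ZMod.natCast_rightInverse x

lemma neg_zmod2 (a : ZMod 2) : -a = a := by revert a; decide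

lemma two_mul_zmod2 (k : ℤ) : ((2*k : ℤ) : ZMod 2) = 0 := by
  rw [ZMod.intCast_zmod_eq_zero_iff_dvd]
  exact ⟨k, by push_cast; ring⟩

theorem stmt_13 (n : ℕ) (hn : 2 ≤ n)
    (D2 : ZMod 2 × ℤ →+ (ZMod 2 × ℤ) × (ZMod 2 × ℤ))
    (D1 : (ZMod 2 × ℤ) × (ZMod 2 × ℤ) →+ ZMod 2 × ℤ)
    (hD2 : ∀ (x : ZMod 2) (y : ℤ),
      D2 (x, y) = (((y : ZMod 2), -(n : ℤ) * y), (-(y : ZMod 2), (n : ℤ) * y)))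
    (hD1 : ∀ p : (ZMod 2 × ℤ) × (ZMod 2 × ℤ),
      D1 p = (-(p.1.2 : ZMod 2) - (p.2.2 : ZMod 2), (n : ℤ) * p.1.2 + (n : ℤ) * p.2.2)) :
    Nonempty (((ZMod 2 × ℤ) ⧸ D1.range) ≃+ ZMod (2 * n)) ∧
    Nonempty ((D1.ker ⧸ D2.range.addSubgroupOf D1.ker) ≃+ ZMod 2 × ZMod (2 * n)) ∧
    Nonempty (D2.ker ≃+ ZMod 2) := by
  have hn0 : (n : ℤ) ≠ 0 := by exact_mod_cast (by omega : n ≠ 0)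
  -- Part 1
  have hrange : D1.range = (phi1 n).ker := by
    ext ⟨x, y⟩
    simp only [AddMonoidHom.mem_range, AddMonoidHom.mem_ker]
    constructor
    · rintro ⟨⟨⟨a, b⟩, ⟨c, d⟩⟩, h⟩
      rw [← h, hD1]
      show phi1 n (-(b : ZMod 2) - (d : ZMod 2), (n:ℤ)*b + (n:ℤ)*d) = 0
      have hc : -(b : ZMod 2) - (d : ZMod 2) = (((-(b+d) : ℤ)) : ZMod 2) := by
        push_cast; ring
      rw [phi1_apply, hc, auxC_intCast, ← Int.cast_add,
        ZMod.intCast_zmod_eq_zero_iff_dvd]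
      exact ⟨0, by push_cast; ring⟩
    · intro h
      rw [phi1_apply, ← val_intCast2 x, auxC_intCast, ← Int.cast_add,
        ZMod.intCast_zmod_eq_zero_iff_dvd] at h
      obtain ⟨k, hk⟩ := h
      push_cast at hk
      refine ⟨((0, 2*k - (x.val : ℤ)), (0, 0)), ?_⟩
      rw [hD1]
      show (-(((2*k - (x.val:ℤ)) : ℤ) : ZMod 2) - ((0:ℤ) : ZMod 2),
            (n:ℤ)*(2*k - (x.val:ℤ)) + (n:ℤ)*0) = (x, y)
      rw [Prod.mk.injEq]
      refine ⟨?_, by linear_combination -hk⟩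
      have e : -(((2*k - (x.val:ℤ)) : ℤ) : ZMod 2) - ((0:ℤ) : ZMod 2)
          = ((x.val:ℤ) : ZMod 2) - ((2*k : ℤ) : ZMod 2) := by push_cast; ring
      rw [e, two_mul_zmod2, sub_zero, val_intCast2]
  -- Part 2 homomorphism
  set ψ : D1.ker →+ ZMod 2 × ZMod (2*n) := (Psi n).comp D1.ker.subtype with hψ
  have hψsurj : Function.Surjective ψ := by
    rintro ⟨a, c⟩
    obtain ⟨y, hy⟩ := ZMod.intCast_surjective (n := 2*n) (c - auxC n a)
    have hmem : ((a, y), ((0 : ZMod 2), -y)) ∈ D1.ker := by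
      rw [AddMonoidHom.mem_ker, hD1]
      show (-(y : ZMod 2) - ((-y : ℤ) : ZMod 2), (n:ℤ)*y + (n:ℤ)*(-y)) = 0
      rw [Prod.mk_eq_zero]
      exact ⟨by push_cast; ring, by ring⟩
    refine ⟨⟨_, hmem⟩, ?_⟩
    show Psi n ((a, y), ((0 : ZMod 2), -y)) = (a, c)
    rw [Psi_apply, Prod.mk.injEq]
    exact ⟨by rw [sub_zero], by rw [hy]; ring⟩
  have hker : D2.range.addSubgroupOf D1.ker = ψ.ker := by
    ext ⟨⟨⟨x, y⟩, ⟨z, w⟩⟩, hmem⟩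
    rw [AddSubgroup.mem_addSubgroupOf, AddMonoidHom.mem_ker]
    have hmem' := hmem
    rw [AddMonoidHom.mem_ker, hD1] at hmem'
    have hw : (n:ℤ)*y + (n:ℤ)*w = 0 := congrArg Prod.snd hmem'
    have hyw : w = -y := by
      have h0 : (n:ℤ)*(y + w) = 0 := by linear_combination hw
      rcases mul_eq_zero.mp h0 with h | h
      · exact absurd h hn0
      · linarith
    constructor
    · rintro ⟨⟨a, s⟩, hs⟩
      rw [hD2] at hs
      simp only [Prod.mk.injEq] at hs
      obtain ⟨⟨h1, h2⟩, h3, h4⟩ := hs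
      show Psi n ((x, y), (z, w)) = 0
      rw [Psi_apply, Prod.mk_eq_zero]
      refine ⟨?_, ?_⟩
      · rw [← h1, ← h3, sub_neg_eq_add]
        have : ∀ a : ZMod 2, a + a = 0 := by decide
        exact this _
      · rw [← h1, ← h2, auxC_intCast]
        push_cast; ring
    · intro h
      have h' : (x - z, auxC n x + ((y:ℤ) : ZMod (2*n))) = 0 := h
      have h1 : x - z = 0 := congrArg Prod.fst h'
      have h2 : auxC n x + ((y:ℤ) : ZMod (2*n)) = 0 := congrArg Prod.snd h'
      rw [← val_intCast2 x, auxC_intCast, ← Int.cast_add,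
        ZMod.intCast_zmod_eq_zero_iff_dvd] at h2
      obtain ⟨k, hk⟩ := h2
      push_cast at hk
      refine ⟨((0 : ZMod 2), (x.val : ℤ) - 2*k), ?_⟩
      rw [hD2]
      have hz : z = x := (sub_eq_zero.mp h1).symm
      have ha : ((((x.val:ℤ) - 2*k : ℤ)) : ZMod 2) = x := by
        have e : ((((x.val:ℤ) - 2*k : ℤ)) : ZMod 2)
            = ((x.val:ℤ) : ZMod 2) - ((2*k : ℤ) : ZMod 2) := by push_cast; ring
        rw [e, two_mul_zmod2, sub_zero, val_intCast2]
      show ((((((x.val:ℤ) - 2*k : ℤ)) : ZMod 2), -(n:ℤ)*((x.val:ℤ) - 2*k)),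
          (-((((x.val:ℤ) - 2*k : ℤ)) : ZMod 2), (n:ℤ)*((x.val:ℤ) - 2*k)))
          = ((x, y), (z, w))
      simp only [Prod.mk.injEq]
      refine ⟨⟨ha, by linear_combination -hk⟩, ?_, ?_⟩
      · rw [hz, ha]; exact neg_zmod2 x
      · rw [hyw]; linear_combination hk
  refine ⟨⟨(QuotientAddGroup.quotientAddEquivOfEq hrange).trans
      (QuotientAddGroup.quotientKerEquivOfSurjective _ (phi1_surj n))⟩,
    ⟨(QuotientAddGroup.quotientAddEquivOfEq hker).trans
      (QuotientAddGroup.quotientKerEquivOfSurjective _ hψsurj)⟩, ?_⟩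
  -- Part 3
  set f3 : D2.ker →+ ZMod 2 := (AddMonoidHom.fst (ZMod 2) ℤ).comp D2.ker.subtype with hf3
  have key : ∀ (a : ZMod 2) (b : ℤ), (a, b) ∈ D2.ker → b = 0 := by
    intro a b hab
    rw [AddMonoidHom.mem_ker, hD2] at hab
    have h2 : -(n:ℤ)*b = 0 := congrArg (fun p => p.1.2) hab
    rcases mul_eq_zero.mp h2 with h | h
    · exact absurd (neg_eq_zero.mp h) hn0
    · exact h
  have hbij : Function.Bijective f3 := by
    constructor
    · rintro ⟨⟨x, y⟩, hxy⟩ ⟨⟨x', y'⟩, hxy'⟩ h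
      have hx : x = x' := h
      have hy := key _ _ hxy
      have hy' := key _ _ hxy'
      refine Subtype.ext (Prod.ext_iff.mpr ⟨hx, ?_⟩)
      show y = y'
      rw [hy, hy']
    · intro a
      refine ⟨⟨(a, 0), ?_⟩, rfl⟩
      rw [AddMonoidHom.mem_ker, hD2]
      norm_num
  exact ⟨AddEquiv.ofBijective f3 hbij⟩
end
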